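/- Define λ(p,q) = q·(−1/24 − (p²+1)/(24q²)) + p/8 + p·s(p,q)/2. Then for natural numbers n ≥ 1 and b ≥ 1, λ(2n²b² + 2nb + 1, 2nb²) = b²(n³ − n)/12. -/

import Mathlib

/-- The sawtooth function `((x))`: zero on integers, else `x - ⌊x⌋ - 1/2`. -/
def saw (x : ℚ) : ℚ := if x = ⌊x⌋ then 0 else x - ⌊x⌋ - 1/2

/-- The Dedekind sum `s(p,q) = ∑_{i=1}^{|q|} ((i/q)) ((p i/q))`. -/
noncomputable def dedekindSum (p q : ℤ) : ℚ :=
  ∑ i ∈ Finset.Icc (1 : ℤ) |q|, saw ((i : ℚ) / (q : ℚ)) * saw ((p : ℚ) * (i : ℚ) / (q : ℚ))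

/-- Lescop's formula for the lens space `L(p,q)`. -/
noncomputable def lescopLens (p q : ℤ) : ℚ :=
  (q : ℚ) * (-1/24 - ((p : ℚ) ^ 2 + 1) / (24 * (q : ℚ) ^ 2)) + (p : ℚ) / 8 +
    (p : ℚ) * dedekindSum p q / 2

/-!
Write `q = 2nb²` and `p = nq + 2nb + 1`, and index `0 ≤ i < q` as `i = bm + r` with `m < 2nb`,
`r < b`. Then `p i / q ≡ r / b + i / q (mod 1)`, and `r / b + i / q` exceeds `1` exactly when
`m ≥ 2n(b - r)`. So for `i ≠ 0` the summand of `s(p, q)` is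
`(i/q - 1/2)² + (i/q - 1/2) (r/b - [m ≥ 2n(b - r)])`. The first part sums to
`q/12 + 1/(6q)`, less `1/4` for the term `i = 0`; for fixed `r` the second sums over `m` to
`n r (r - b) / b`, hence to `-n(b² - 1)/6` in total. Thus `s(p, q) = n/6 - 1/4 + 1/(12nb²)`,
and the value of `λ(p, q)` follows by algebra.
-/

open Finset

theorem saw_add_intCast (x : ℚ) (k : ℤ) : saw (x + k) = saw x := by
  simp only [saw, Int.floor_add_intCast, Int.cast_add, add_left_inj]
  split_ifs <;> ring

theorem saw_of_mem_Ioo {x : ℚ} (k : ℤ) (hx : x ∈ Set.Ioo (k : ℚ) (k + 1)) :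
    saw x = x - k - 1 / 2 := by
  have hfloor : ⌊x⌋ = k := Int.floor_eq_iff.mpr ⟨hx.1.le, hx.2⟩
  rw [saw, hfloor, if_neg hx.1.ne']

theorem dedekindSum_eq_sum_range (p : ℤ) (q : ℕ) :
    dedekindSum p q = ∑ i ∈ range q, saw ((i : ℚ) / q) * saw ((p : ℚ) * i / q) := by
  set f : ℕ → ℚ := fun i => saw ((i : ℚ) / q) * saw ((p : ℚ) * i / q)
  have hf0 : f 0 = 0 := by simp [f, saw]
  have hfq : f q = 0 := by
    rcases eq_or_ne q 0 with rfl | hq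
    · exact hf0
    · simp [f, saw, hq]
  have hshift : ∑ i ∈ range q, f (i + 1) = ∑ i ∈ range q, f i := by
    have h1 := sum_range_succ' f q
    rw [sum_range_succ] at h1
    linarith
  rw [dedekindSum, Nat.abs_cast, Int.Icc_eq_finset_map, sum_map, ← hshift]
  refine sum_congr (by simp) fun i _ => ?_
  simp [f, add_comm]

theorem sum_range_mul_eq_sum_sum {M : Type*} [AddCommMonoid M] (f : ℕ → M) (N b : ℕ) :
    ∑ i ∈ range (N * b), f i = ∑ m ∈ range N, ∑ r ∈ range b, f (b * m + r) := by
  induction N with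
  | zero => simp
  | succ N ih => rw [Nat.succ_mul, sum_range_add, ih, sum_range_succ, mul_comm N]

section PowerSums

variable {K : Type*} [Field K] [CharZero K]

theorem sum_range_affine (a c : K) (N : ℕ) :
    ∑ k ∈ range N, (a + c * k) = a * N + c * (N * (N - 1) / 2) := by
  induction N with
  | zero => simp
  | succ N ih => rw [sum_range_succ, ih]; push_cast; ring

theorem sum_range_quadratic (a c d : K) (N : ℕ) :
    ∑ k ∈ range N, (a + c * k + d * k ^ 2) =
      a * N + c * (N * (N - 1) / 2) + d * (N * (N - 1) * (2 * N - 1) / 6) := by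
  induction N with
  | zero => simp
  | succ N ih => rw [sum_range_succ, ih]; push_cast; ring

theorem sum_range_div_sub_half_sq (q : ℕ) :
    ∑ i ∈ range q, ((i : K) / q - 1 / 2) ^ 2 = (q : K) / 12 + 1 / (6 * q) := by
  rcases eq_or_ne q 0 with rfl | hq
  · simp
  have hqK : (q : K) ≠ 0 := Nat.cast_ne_zero.mpr hq
  calc ∑ i ∈ range q, ((i : K) / q - 1 / 2) ^ 2
      = ∑ i ∈ range q, (1 / 4 + (-1 / (q : K)) * i + (1 / (q : K) ^ 2) * i ^ 2) :=
        sum_congr rfl fun i _ => by field_simp; ring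
    _ = (q : K) / 12 + 1 / (6 * q) := by rw [sum_range_quadratic]; field_simp; ring

end PowerSums

theorem saw_div_add_div_lens {n b m r q : ℕ} (hq : q = 2 * n * b ^ 2) (hm : m < 2 * n * b)
    (hr : r < b) (hi : 0 < b * m + r) :
    saw ((r : ℚ) / b + ((b * m + r : ℕ) : ℚ) / q) =
      (r : ℚ) / b + ((b * m + r : ℕ) : ℚ) / q - 1 / 2 -
        if 2 * n * (b - r) ≤ m then 1 else 0 := by
  have hbQ : (0 : ℚ) < b := by exact_mod_cast hr.trans_le' (Nat.zero_le r)
  have hnQ : (0 : ℚ) < n := by exact_mod_cast Nat.pos_of_ne_zero (by rintro rfl; simp at hm)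
  have hqpos : (0 : ℚ) < q := by rw [hq]; push_cast; positivity
  have hqQ : (q : ℚ) = 2 * n * b ^ 2 := by rw [hq]; push_cast; ring
  have hy : (r : ℚ) / b + ((b * m + r : ℕ) : ℚ) / q = (2 * n * b * r + b * m + r) / q := by
    rw [hqQ]; push_cast; field_simp; ring
  have hbr : ((b - r : ℕ) : ℚ) = b - r := Nat.cast_sub hr.le
  have hrb : (r : ℚ) + 1 ≤ b := by exact_mod_cast hr
  rw [hy]
  split_ifs with h
  · have hr0 : (0 : ℚ) < r := by
      have : 0 < r := Nat.pos_of_ne_zero fun h0 => by simp only [h0, Nat.sub_zero] at h; omega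
      exact_mod_cast this
    have hmr : (2 * n * (b - r) : ℚ) ≤ m := by rw [← hbr]; exact_mod_cast h
    have hmb : (m : ℚ) + 1 ≤ 2 * n * b := by exact_mod_cast hm
    rw [saw_of_mem_Ioo 1 ⟨?_, ?_⟩]
    · push_cast; ring
    · rw [Int.cast_one, lt_div_iff₀ hqpos, hqQ]
      nlinarith [mul_le_mul_of_nonneg_left hmr hbQ.le]
    · rw [Int.cast_one, div_lt_iff₀ hqpos, hqQ]
      nlinarith [mul_le_mul_of_nonneg_left hmb hbQ.le,
        mul_le_mul_of_nonneg_left hrb (by positivity : (0 : ℚ) ≤ 2 * n * b)]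
  · have hmr : (m : ℚ) + 1 ≤ 2 * n * (b - r) := by
      rw [← hbr]; exact_mod_cast Nat.lt_of_not_le h
    rw [saw_of_mem_Ioo 0 ⟨?_, ?_⟩]
    · push_cast; ring
    · have hiQ : (0 : ℚ) < b * m + r := by exact_mod_cast hi
      have : (0 : ℚ) ≤ 2 * n * b * r := by positivity
      rw [Int.cast_zero]
      exact div_pos (by linarith) hqpos
    · rw [Int.cast_zero, zero_add, div_lt_one hqpos, hqQ]
      nlinarith [mul_le_mul_of_nonneg_left hmr hbQ.le]

theorem saw_mul_saw_lens {n b m r q : ℕ} {p : ℤ} (hq : q = 2 * n * b ^ 2)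
    (hp : p = n * q + 2 * n * b + 1) (hm : m < 2 * n * b) (hr : r < b) :
    saw (((b * m + r : ℕ) : ℚ) / q) * saw ((p : ℚ) * ((b * m + r : ℕ) : ℚ) / q) =
      ((((b * m + r : ℕ) : ℚ) / q - 1 / 2) ^ 2 - if b * m + r = 0 then 1 / 4 else 0) +
        (((b * m + r : ℕ) : ℚ) / q - 1 / 2) *
          ((r : ℚ) / b - if 2 * n * (b - r) ≤ m then 1 else 0) := by
  have hn : 0 < n := Nat.pos_of_ne_zero (by rintro rfl; simp at hm)
  have hb : 0 < b := hr.trans_le' (Nat.zero_le r)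
  rcases Nat.eq_zero_or_pos (b * m + r) with hi | hi
  · obtain ⟨rfl, rfl⟩ : m = 0 ∧ r = 0 := by
      rcases Nat.mul_eq_zero.mp (Nat.eq_zero_of_add_eq_zero_right hi) with h | h <;> omega
    norm_num [saw, hn.ne', hb.ne']
  have hqpos : (0 : ℚ) < q := by rw [hq]; push_cast; positivity
  have hlt : ((b * m + r : ℕ) : ℚ) < q := by
    have : b * m + r < q := by rw [hq]; nlinarith
    exact_mod_cast this
  have hx : saw (((b * m + r : ℕ) : ℚ) / q) = ((b * m + r : ℕ) : ℚ) / q - 1 / 2 := by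
    rw [saw_of_mem_Ioo 0 ⟨?_, ?_⟩]
    · simp
    · rw [Int.cast_zero]; exact div_pos (Nat.cast_pos.mpr hi) hqpos
    · rw [Int.cast_zero, zero_add, div_lt_one hqpos]; exact hlt
  have hsplit : (p : ℚ) * ((b * m + r : ℕ) : ℚ) / q =
      ((r : ℚ) / b + ((b * m + r : ℕ) : ℚ) / q) + ((n * (b * m + r) + m : ℕ) : ℤ) := by
    rw [hp, hq]; push_cast; field_simp; ring
  rw [hx, hsplit, saw_add_intCast, saw_div_add_div_lens hq hm hr hi, if_neg hi.ne']
  ring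

theorem sum_range_lens_cross {n b r q : ℕ} (hq : q = 2 * n * b ^ 2) (hn : n ≠ 0) (hr : r < b) :
    ∑ m ∈ range (2 * n * b), (((b * m + r : ℕ) : ℚ) / q - 1 / 2) *
        ((r : ℚ) / b - if 2 * n * (b - r) ≤ m then 1 else 0) = n * r * (r - b) / b := by
  have hqQ : (q : ℚ) = 2 * n * b ^ 2 := by rw [hq]; push_cast; ring
  have hnQ : (n : ℚ) ≠ 0 := Nat.cast_ne_zero.mpr hn
  have hbQ : (b : ℚ) ≠ 0 := Nat.cast_ne_zero.mpr (by omega)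
  have hbr : ((b - r : ℕ) : ℚ) = b - r := Nat.cast_sub hr.le
  have hfilter : (range (2 * n * b)).filter (2 * n * (b - r) ≤ ·) =
      Ico (2 * n * (b - r)) (2 * n * b) := by
    ext m; simp [and_comm]
  have hlen : 2 * n * b - 2 * n * (b - r) = 2 * n * r := by
    rw [← Nat.mul_sub, Nat.sub_sub_self hr.le]
  have hall : ∑ m ∈ range (2 * n * b), (((b * m + r : ℕ) : ℚ) / q - 1 / 2) * (r / b) =
      ∑ m ∈ range (2 * n * b), ((r / q - 1 / 2) * (r / b) + (r / q) * m : ℚ) :=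
    sum_congr rfl fun m _ => by push_cast; field_simp; ring
  have htail : ∑ m ∈ Ico (2 * n * (b - r)) (2 * n * b), (((b * m + r : ℕ) : ℚ) / q - 1 / 2) =
      ∑ k ∈ range (2 * n * r),
        (((b * (2 * n * (b - r)) + r : ℕ) / q - 1 / 2) + (b / q) * k : ℚ) := by
    rw [sum_Ico_eq_sum_range, hlen]
    exact sum_congr rfl fun k _ => by push_cast; field_simp; ring
  simp only [mul_sub, mul_ite, mul_one, mul_zero, sum_sub_distrib]
  rw [← sum_filter, hfilter, hall, htail, sum_range_affine, sum_range_affine]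
  push_cast [hbr, hqQ]
  field_simp
  ring

theorem sum_range_mul_mul_sub_div {n b : ℕ} (hb : b ≠ 0) :
    ∑ r ∈ range b, (n * r * (r - b) / b : ℚ) = -(n * (b ^ 2 - 1) / 6) := by
  have hbQ : (b : ℚ) ≠ 0 := Nat.cast_ne_zero.mpr hb
  calc ∑ r ∈ range b, (n * r * (r - b) / b : ℚ)
      = ∑ r ∈ range b, (0 + (-n) * r + (n / b) * r ^ 2 : ℚ) :=
        sum_congr rfl fun r _ => by field_simp; ring
    _ = -(n * (b ^ 2 - 1) / 6) := by rw [sum_range_quadratic]; field_simp; ring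

theorem dedekindSum_lens {n b : ℕ} (hn : n ≠ 0) (hb : b ≠ 0) :
    dedekindSum (2 * (n : ℤ) ^ 2 * (b : ℤ) ^ 2 + 2 * (n : ℤ) * (b : ℤ) + 1)
        (2 * (n : ℤ) * (b : ℤ) ^ 2) = n / 6 - 1 / 4 + 1 / (12 * n * b ^ 2) := by
  set q : ℕ := 2 * n * b ^ 2 with hq
  have hqZ : 2 * (n : ℤ) * (b : ℤ) ^ 2 = q := by push_cast [hq]; ring
  have hp : 2 * (n : ℤ) ^ 2 * b ^ 2 + 2 * n * b + 1 = n * q + 2 * n * b + 1 := by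
    push_cast [hq]; ring
  have hrange : range q = range (2 * n * b * b) := by rw [hq]; ring_nf
  have hq0 : q ≠ 0 := by positivity
  have hsq : ∑ i ∈ range q, (((i : ℚ) / q - 1 / 2) ^ 2 - if i = 0 then 1 / 4 else 0) =
      (q : ℚ) / 12 + 1 / (6 * q) - 1 / 4 := by
    rw [sum_sub_distrib, sum_range_div_sub_half_sq, sum_ite_eq',
      if_pos (mem_range.mpr (Nat.pos_of_ne_zero hq0))]
  have hcross : ∑ r ∈ range b, ∑ m ∈ range (2 * n * b), (((b * m + r : ℕ) : ℚ) / q - 1 / 2) *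
      ((r : ℚ) / b - if 2 * n * (b - r) ≤ m then 1 else 0) = -(n * (b ^ 2 - 1) / 6) := by
    rw [sum_congr rfl fun r hr => sum_range_lens_cross hq hn (mem_range.mp hr),
      sum_range_mul_mul_sub_div hb]
  rw [hqZ, dedekindSum_eq_sum_range, hrange, sum_range_mul_eq_sum_sum,
    sum_congr rfl fun m hm => sum_congr rfl fun r hr =>
      saw_mul_saw_lens hq hp (mem_range.mp hm) (mem_range.mp hr)]
  simp only [sum_add_distrib]
  rw [← sum_range_mul_eq_sum_sum
      (fun i => ((i : ℚ) / q - 1 / 2) ^ 2 - if i = 0 then 1 / 4 else 0),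
    ← hrange, hsq, sum_comm, hcross, hq]
  push_cast
  field_simp
  ring

theorem lescop_lens_nb (n b : ℕ) (hn : 1 ≤ n) (hb : 1 ≤ b) :
    lescopLens (2 * (n : ℤ) ^ 2 * (b : ℤ) ^ 2 + 2 * (n : ℤ) * (b : ℤ) + 1)
        (2 * (n : ℤ) * (b : ℤ) ^ 2) =
      (b : ℚ) ^ 2 * ((n : ℚ) ^ 3 - (n : ℚ)) / 12 := by
  have hnQ : (n : ℚ) ≠ 0 := by positivity
  have hbQ : (b : ℚ) ≠ 0 := by positivity
  rw [lescopLens, dedekindSum_lens (by omega) (by omega)]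
  push_cast
  field_simp
  ring
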